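/- Let A be a nonzero matrix and Q(A) = A - ε with ‖ε‖_F ≤ δ for some δ ≥ 0. If σ_max(ε) ≤ σ_max(A)/2 and Q(A) ≠ 0, then |sqrt(SR(Q(A))) - sqrt(SR(A))| ≤ sqrt(SR(A)) + 2δ/σ_max(A) + 2·sqrt(SR(A)), i.e., sqrt(SR(Q(A))) lies in the interval [ (1/2)(sqrt(SR(A)) - δ/σ_max(A)), 2(sqrt(SR(A)) + δ/σ_max(A)) ]. -/

import Mathlib

/-- Frobenius norm of a real matrix: the ℓ² norm of all entries. -/
noncomputable def frob {m n : ℕ} (M : Matrix (Fin m) (Fin n) ℝ) : ℝ :=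
  Real.sqrt (∑ i, ∑ j, (M i j) ^ 2)

/-- Largest singular value (operator 2-norm) of a real matrix. -/
noncomputable def sMax {m n : ℕ} (M : Matrix (Fin m) (Fin n) ℝ) : ℝ :=
  ‖(Matrix.toEuclideanLin M).toContinuousLinearMap‖

/-- Stable rank of a matrix. -/
noncomputable def SR {m n : ℕ} (M : Matrix (Fin m) (Fin n) ℝ) : ℝ :=
  frob M ^ 2 / sMax M ^ 2

lemma frob_eq {m n : ℕ} (M : Matrix (Fin m) (Fin n) ℝ) :
    frob M = ‖(WithLp.equiv 2 (Fin m × Fin n → ℝ)).symm (fun p => M p.1 p.2)‖ := by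
  rw [EuclideanSpace.norm_eq]
  simp [frob, Fintype.sum_prod_type, sq_abs]

lemma frob_nonneg {m n : ℕ} (M : Matrix (Fin m) (Fin n) ℝ) : 0 ≤ frob M :=
  Real.sqrt_nonneg _

lemma frob_sub_le {m n : ℕ} (A B : Matrix (Fin m) (Fin n) ℝ) :
    frob (A - B) ≤ frob A + frob B := by
  simp only [frob_eq]
  have : (WithLp.equiv 2 (Fin m × Fin n → ℝ)).symm (fun p => (A - B) p.1 p.2)
      = (WithLp.equiv 2 (Fin m × Fin n → ℝ)).symm (fun p => A p.1 p.2)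
        - (WithLp.equiv 2 (Fin m × Fin n → ℝ)).symm (fun p => B p.1 p.2) := by
    rfl
  rw [this]; exact norm_sub_le _ _

lemma frob_sub_ge {m n : ℕ} (A B : Matrix (Fin m) (Fin n) ℝ) :
    frob A - frob B ≤ frob (A - B) := by
  simp only [frob_eq]
  have : (WithLp.equiv 2 (Fin m × Fin n → ℝ)).symm (fun p => (A - B) p.1 p.2)
      = (WithLp.equiv 2 (Fin m × Fin n → ℝ)).symm (fun p => A p.1 p.2)
        - (WithLp.equiv 2 (Fin m × Fin n → ℝ)).symm (fun p => B p.1 p.2) := by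
    rfl
  rw [this]; exact norm_sub_norm_le _ _

lemma sMax_nonneg {m n : ℕ} (M : Matrix (Fin m) (Fin n) ℝ) : 0 ≤ sMax M :=
  norm_nonneg _

lemma sMax_pos {m n : ℕ} {M : Matrix (Fin m) (Fin n) ℝ} (hM : M ≠ 0) : 0 < sMax M := by
  rw [sMax, norm_pos_iff]
  intro h
  apply hM
  have h1 : Matrix.toEuclideanLin M = 0 := by
    ext x i
    have h2 := congrFun (congrArg (DFunLike.coe) h) x
    simp only [ContinuousLinearMap.zero_apply] at h2
    have h3 : (Matrix.toEuclideanLin M) x = 0 := h2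
    simp [h3]
  simpa using (map_eq_zero_iff Matrix.toEuclideanLin (Matrix.toEuclideanLin.injective)).mp h1

lemma sMax_sub_le {m n : ℕ} (A B : Matrix (Fin m) (Fin n) ℝ) :
    sMax (A - B) ≤ sMax A + sMax B := by
  unfold sMax
  have : (Matrix.toEuclideanLin (A - B)).toContinuousLinearMap
      = (Matrix.toEuclideanLin A).toContinuousLinearMap - (Matrix.toEuclideanLin B).toContinuousLinearMap := by
    rw [map_sub]; exact map_sub _ _ _
  rw [this]; exact norm_sub_le _ _

lemma sMax_sub_ge {m n : ℕ} (A B : Matrix (Fin m) (Fin n) ℝ) :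
    sMax A - sMax B ≤ sMax (A - B) := by
  unfold sMax
  have : (Matrix.toEuclideanLin (A - B)).toContinuousLinearMap
      = (Matrix.toEuclideanLin A).toContinuousLinearMap - (Matrix.toEuclideanLin B).toContinuousLinearMap := by
    rw [map_sub]; exact map_sub _ _ _
  rw [this]; exact norm_sub_norm_le _ _

lemma sqrt_SR {m n : ℕ} (M : Matrix (Fin m) (Fin n) ℝ) :
    Real.sqrt (SR M) = frob M / sMax M := by
  rw [SR, Real.sqrt_div (sq_nonneg _), Real.sqrt_sq (frob_nonneg M), Real.sqrt_sq (sMax_nonneg M)]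

theorem stable_rank_quantization_two_sided
    {m n : ℕ} (A ε : Matrix (Fin m) (Fin n) ℝ) (δ : ℝ)
    (hδ : 0 ≤ δ) (hεδ : frob ε ≤ δ)
    (hA : A ≠ 0) (hQ : A - ε ≠ 0)
    (hε : sMax ε ≤ sMax A / 2) :
    (1 / 2) * (Real.sqrt (SR A) - δ / sMax A) ≤ Real.sqrt (SR (A - ε)) ∧
      Real.sqrt (SR (A - ε)) ≤ 2 * (Real.sqrt (SR A) + δ / sMax A) := by
  have hS : 0 < sMax A := sMax_pos hA
  have hSg : sMax A / 2 ≤ sMax (A - ε) := by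
    have := sMax_sub_ge A ε; linarith
  have hS' : 0 < sMax (A - ε) := by linarith
  have hSl : sMax (A - ε) ≤ 2 * sMax A := by
    have := sMax_sub_le A ε; have := sMax_nonneg ε; linarith
  have hFu : frob (A - ε) ≤ frob A + δ := by
    have := frob_sub_le A ε; linarith
  have hFl : frob A - δ ≤ frob (A - ε) := by
    have := frob_sub_ge A ε; linarith
  rw [sqrt_SR, sqrt_SR]
  constructor
  · have key : (frob A - δ) / (2 * sMax A) ≤ frob (A - ε) / sMax (A - ε) := by
      rcases le_or_gt (frob A - δ) 0 with h | h
      · have h1 : (frob A - δ) / (2 * sMax A) ≤ 0 :=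
          div_nonpos_iff.mpr (Or.inr ⟨h, by linarith⟩)
        exact h1.trans (div_nonneg (frob_nonneg _) hS'.le)
      · exact div_le_div₀ (frob_nonneg _) hFl hS' hSl
    have heq : (1 / 2) * (frob A / sMax A - δ / sMax A) = (frob A - δ) / (2 * sMax A) := by
      field_simp
    linarith
  · have key : frob (A - ε) / sMax (A - ε) ≤ (frob A + δ) / (sMax A / 2) :=
      div_le_div₀ (add_nonneg (frob_nonneg A) hδ) hFu (by linarith) hSg
    have heq : (frob A + δ) / (sMax A / 2) = 2 * (frob A / sMax A + δ / sMax A) := by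
      field_simp
    linarith
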